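/- arXiv:2405.20124 — 2 statements merged into one kernel-verified Lean document; each statement's English description precedes it below -/
import Mathlib

section
/- Suppose the divergence generator d satisfies Assumptions 2, 3 and 4. Then the function F(γ) = Σ_{i=1}^p d(s(γ, x̂_i), x̂_i) − ε is differentiable and strictly decreasing on (0,∞); moreover lim_{γ→0⁺} F(γ) > 0 and lim_{γ→∞} F(γ) < 0. -/
open Matrix Set Filter MeasureTheory
open scoped BigOperators Classical

noncomputable section

/-- The space of real `p × p` matrices. -/
abbrev Mat (p : ℕ) := Matrix (Fin p) (Fin p) ℝ

/-- Orthogonal matrix. -/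
def IsOrthoMat {p : ℕ} (V : Mat p) : Prop := V * Vᵀ = 1

/-- The loss function `Tr(X²) − 2 Tr(Σ X)` of the estimation problem. -/
def cseLoss {p : ℕ} (X S : Mat p) : ℝ := (X * X).trace - 2 * (S * X).trace

/-- Squared Frobenius norm. -/
def frobSq {p : ℕ} (X : Mat p) : ℝ := (Xᵀ * X).trace

/-- Feasibility for the uncertainty set `B_ε(Σ̂)`. -/
def Feas {p : ℕ} (D : Mat p → Mat p → EReal) (Sh : Mat p) (ε : ℝ) (S : Mat p) : Prop :=
  S.PosSemidef ∧ D S Sh ≤ (ε : EReal)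

/-- The worst-case (primal) objective of the problem (CSE). -/
def primalVal {p : ℕ} (D : Mat p → Mat p → EReal) (Sh : Mat p) (ε : ℝ) (X : Mat p) : EReal :=
  ⨆ S : {S : Mat p // Feas D Sh ε S}, (cseLoss X S.1 : EReal)

/-- The inner (dual) objective. -/
def dualVal {p : ℕ} (S : Mat p) : EReal :=
  ⨅ X : {X : Mat p // X.PosSemidef}, (cseLoss X.1 S : EReal)

/-- `X` solves the primal problem (CSE). -/
def IsCSESol {p : ℕ} (D : Mat p → Mat p → EReal) (Sh : Mat p) (ε : ℝ) (X : Mat p) : Prop :=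
  X.PosSemidef ∧ ∀ Y : Mat p, Y.PosSemidef → primalVal D Sh ε X ≤ primalVal D Sh ε Y

/-- `S` solves the dual problem. -/
def IsDualSol {p : ℕ} (D : Mat p → Mat p → EReal) (Sh : Mat p) (ε : ℝ) (S : Mat p) : Prop :=
  Feas D Sh ε S ∧ ∀ T : Mat p, Feas D Sh ε T → dualVal T ≤ dualVal S

/-- `S` solves the problem (P_Mat). -/
def IsPMatSol {p : ℕ} (D : Mat p → Mat p → EReal) (Sh : Mat p) (ε : ℝ) (S : Mat p) : Prop :=
  Feas D Sh ε S ∧ ∀ T : Mat p, Feas D Sh ε T → frobSq S ≤ frobSq T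

/-- Assumption 1 (minimax): the optimal value of (CSE) equals the optimal value of the dual. -/
def MinimaxEq {p : ℕ} (D : Mat p → Mat p → EReal) (Sh : Mat p) (ε : ℝ) : Prop :=
  (⨅ X : {X : Mat p // X.PosSemidef}, primalVal D Sh ε X.1)
    = ⨆ S : {S : Mat p // Feas D Sh ε S}, dualVal S.1

/-- `x` solves the problem (P_Vec). -/
def IsPVecSol {p : ℕ} (d : ℝ → ℝ → EReal) (xh : Fin p → ℝ) (ε : ℝ) (x : Fin p → ℝ) : Prop :=
  (∀ i, 0 ≤ x i) ∧ (∑ i, d (x i) (xh i)) ≤ (ε : EReal) ∧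
  ∀ y : Fin p → ℝ, (∀ i, 0 ≤ y i) → (∑ i, d (y i) (xh i)) ≤ (ε : EReal) →
    ∑ i, (x i) ^ 2 ≤ ∑ i, (y i) ^ 2

/-- `D` is a divergence: nonnegative, and zero iff the arguments coincide (on its domain). -/
def DivergenceBasic {p : ℕ} (D : Mat p → Mat p → EReal) : Prop :=
  (∀ X Y : Mat p, 0 ≤ D X Y) ∧
  (∀ X Y : Mat p, X.PosSemidef → Y.PosSemidef → D X Y ≠ ⊤ → (D X Y = 0 ↔ X = Y))

/-- Assumption 2 (spectral divergence) for `D` with generator `d`: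
(a) orthogonal equivariance, (b) spectrality with continuous generator, (c) rearrangement. -/
def Assumption2 {p : ℕ} (D : Mat p → Mat p → EReal) (d : ℝ → ℝ → EReal) : Prop :=
  (∀ X Y : Mat p, X.PosSemidef → Y.PosSemidef → ∀ V : Mat p, IsOrthoMat V →
      D X Y = D (V * X * Vᵀ) (V * Y * Vᵀ)) ∧
  (∀ x y : Fin p → ℝ, (∀ i, 0 ≤ x i) → (∀ i, 0 ≤ y i) →
      D (Matrix.diagonal x) (Matrix.diagonal y) = ∑ i, d (x i) (y i)) ∧
  (∀ b : ℝ, 0 < b → ContinuousOn (fun a => d a b) (Set.Ici 0)) ∧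
  (∀ x y : Fin p → ℝ, Monotone x → Monotone y → (∀ i, 0 ≤ x i) → (∀ i, 0 ≤ y i) →
    ∀ V : Mat p, IsOrthoMat V →
      D (Matrix.diagonal x) (Matrix.diagonal y)
        ≤ D (V * Matrix.diagonal x * Vᵀ) (Matrix.diagonal y) ∧
      (D (V * Matrix.diagonal x * Vᵀ) (Matrix.diagonal y) ≠ ⊤ →
        (D (V * Matrix.diagonal x * Vᵀ) (Matrix.diagonal y)
            = D (Matrix.diagonal x) (Matrix.diagonal y)
          ↔ V * Matrix.diagonal x * Vᵀ = Matrix.diagonal x)))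

/-- The generator-level part of Assumption 2: `d` is a spectral divergence on `ℝ₊`. -/
def GenBasic (d : ℝ → ℝ → EReal) : Prop :=
  (∀ a b : ℝ, 0 ≤ a → 0 ≤ b → 0 ≤ d a b) ∧
  (∀ a b : ℝ, 0 ≤ a → 0 ≤ b → d a b ≠ ⊤ → (d a b = 0 ↔ a = b)) ∧
  (∀ b : ℝ, 0 < b → ContinuousOn (fun a => d a b) (Set.Ici 0))

/-- Assumption 3 (regularity of input parameters). -/
def Assumption3 {p : ℕ} (d : ℝ → ℝ → EReal) (xh : Fin p → ℝ) (ε : ℝ) : Prop :=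
  (∀ i, d (xh i) (xh i) ≠ ⊤) ∧ 0 < ε ∧ (ε : EReal) < ∑ i, d 0 (xh i)

/-- Assumption 4 (smoothness and convexity of the generator): for every `b > 0`,
`a ↦ d(a,b)` is finite and twice continuously differentiable on `(0,∞)` with partial
derivatives `d₁, d₂`, and convex on `[0,b]` (as an extended-real-valued function). -/
def Assumption4 (d : ℝ → ℝ → EReal) (d₁ d₂ : ℝ → ℝ → ℝ) : Prop :=
  (∀ a b : ℝ, 0 < a → 0 < b → d a b ≠ ⊤) ∧
  (∀ a b : ℝ, 0 < a → 0 < b → HasDerivAt (fun t => (d t b).toReal) (d₁ a b) a) ∧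
  (∀ a b : ℝ, 0 < a → 0 < b → HasDerivAt (fun t => d₁ t b) (d₂ a b) a) ∧
  (∀ b : ℝ, 0 < b → ContinuousOn (fun a => d₂ a b) (Set.Ioi 0)) ∧
  (∀ b : ℝ, 0 < b → ∀ a₁ ∈ Set.Icc (0:ℝ) b, ∀ a₂ ∈ Set.Icc (0:ℝ) b, ∀ t ∈ Set.Icc (0:ℝ) 1,
      d (t * a₁ + (1 - t) * a₂) b ≤ (t : EReal) * d a₁ b + ((1 - t : ℝ) : EReal) * d a₂ b)

/-- Assumption 5 (differential inequality): `d` is twice continuously differentiable on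
`(0,∞)²` (mixed partial `d₁b` of `d₁` in `b` exists and the second partials are continuous)
and satisfies `a·∂²d/∂a² + b·∂²d/∂a∂b ≥ ∂d/∂a` for `0 < a < b`. -/
def Assumption5 (d₁ d₂ d₁b : ℝ → ℝ → ℝ) : Prop :=
  (∀ a b : ℝ, 0 < a → 0 < b → HasDerivAt (fun t => d₁ a t) (d₁b a b) b) ∧
  ContinuousOn (fun q : ℝ × ℝ => d₂ q.1 q.2) (Set.Ioi 0 ×ˢ Set.Ioi 0) ∧
  ContinuousOn (fun q : ℝ × ℝ => d₁b q.1 q.2) (Set.Ioi 0 ×ˢ Set.Ioi 0) ∧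
  (∀ a b : ℝ, 0 < a → a < b → d₁ a b ≤ a * d₂ a b + b * d₁b a b)

/-- The eigenvalue map `s`: for `γ, b > 0`, `s(γ,b)` is the unique `a ≥ 0` with
`2a + γ·∂d/∂a(a,b) = 0`; and `s(γ,b) = 0` if `γ = 0` or `b = 0`. -/
def EigenMapSpec (d₁ s : ℝ → ℝ → ℝ) : Prop :=
  (∀ γ b : ℝ, γ = 0 ∨ b = 0 → s γ b = 0) ∧
  (∀ γ b : ℝ, 0 < γ → 0 < b →
    0 ≤ s γ b ∧ 2 * s γ b + γ * d₁ (s γ b) b = 0 ∧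
    ∀ a : ℝ, 0 ≤ a → 2 * a + γ * d₁ a b = 0 → a = s γ b)

/-!
Fix `b > 0`. The function `a ↦ d(a,b)` is convex on `(0,b]` and vanishes only at `a = b`, so
`∂d/∂a < 0` on `(0,b)` and `∂²d/∂a² ≥ 0` there. Hence `a ↦ -2a / ∂d/∂a(a,b)` is a strictly
increasing bijection from `(0,b)` onto `(0,∞)` whose inverse is `γ ↦ s(γ,b)`: this map is
continuous by monotonicity, differentiable by the inverse function theorem, and increases from `0`
(as `γ → 0⁺`) to `b` (as `γ → ∞`). Each summand `d(s(γ,b),b)` therefore decreases strictly from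
`d(0,b)` to `d(b,b) = 0`, while the summands with `x̂ᵢ = 0` vanish identically. This gives the
limits `Σᵢ d(0,x̂ᵢ) - ε > 0` and `-ε < 0`.
-/

open scoped Topology

theorem EReal.coe_finsetSum {ι : Type*} (t : Finset ι) (f : ι → ℝ) :
    ((∑ i ∈ t, f i : ℝ) : EReal) = ∑ i ∈ t, (f i : EReal) :=
  map_sum (⟨⟨Real.toEReal, EReal.coe_zero⟩, EReal.coe_add⟩ : ℝ →+ EReal) f t

theorem EReal.tendsto_finsetSum {ι α : Type*} {l : Filter α} {f : ι → α → EReal}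
    {a : ι → EReal} (t : Finset ι) (hf : ∀ i ∈ t, Tendsto (f i) l (𝓝 (a i)))
    (ha : ∀ i ∈ t, a i ≠ ⊥) :
    Tendsto (fun x => ∑ i ∈ t, f i x) l (𝓝 (∑ i ∈ t, a i)) := by
  induction t using Finset.induction_on with
  | empty => simpa using tendsto_const_nhds
  | insert j t hj ih =>
    rw [Finset.forall_mem_insert] at hf ha
    simp only [Finset.sum_insert hj]
    have hrest : ∑ i ∈ t, a i ≠ ⊥ :=
      Finset.sum_induction _ (· ≠ ⊥) (fun _ _ hx hy => EReal.add_ne_bot_iff.2 ⟨hx, hy⟩)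
        (by simp) ha.2
    exact (EReal.continuousAt_add (Or.inr hrest) (Or.inl ha.1)).tendsto.comp
      (hf.1.prodMk_nhds (ih hf.2 ha.2))

theorem EReal.tendsto_sub_coe {α : Type*} {l : Filter α} {f : α → EReal} {a : EReal}
    (hf : Tendsto f l (𝓝 a)) (c : ℝ) : Tendsto (fun x => f x - c) l (𝓝 (a - c)) :=
  (EReal.continuousAt_add (Or.inr (EReal.coe_ne_bot (-c))) (Or.inr (EReal.coe_ne_top (-c))))
    |>.tendsto.comp (hf.prodMk_nhds tendsto_const_nhds)

section Generator

variable {d : ℝ → ℝ → EReal} {d₁ d₂ : ℝ → ℝ → ℝ} {a b : ℝ}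

theorem GenBasic.ne_bot (hgen : GenBasic d) (ha : 0 ≤ a) (hb : 0 ≤ b) : d a b ≠ ⊥ :=
  ne_bot_of_le_ne_bot (by simp) (hgen.1 a b ha hb)

theorem GenBasic.toReal_nonneg (hgen : GenBasic d) (ha : 0 ≤ a) (hb : 0 ≤ b) :
    0 ≤ (d a b).toReal :=
  EReal.toReal_nonneg (hgen.1 a b ha hb)

theorem GenBasic.self_eq_zero (hgen : GenBasic d) (hb : 0 ≤ b) (hbb : d b b ≠ ⊤) : d b b = 0 :=
  (hgen.2.1 b b hb hb hbb).2 rfl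

variable (hgen : GenBasic d) (hA4 : Assumption4 d d₁ d₂)
include hgen hA4

theorem coe_toReal_gen (ha : 0 < a) (hb : 0 < b) : ((d a b).toReal : EReal) = d a b :=
  EReal.coe_toReal (hA4.1 a b ha hb) (hgen.ne_bot ha.le hb.le)

theorem toReal_gen_self (hb : 0 < b) : (d b b).toReal = 0 := by
  rw [hgen.self_eq_zero hb.le (hA4.1 b b hb hb), EReal.toReal_zero]

theorem toReal_gen_pos (ha : 0 < a) (hb : 0 < b) (hab : a ≠ b) : 0 < (d a b).toReal := by
  have hne : d a b ≠ 0 := fun h => hab ((hgen.2.1 a b ha.le hb.le (hA4.1 a b ha hb)).1 h)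
  exact EReal.toReal_pos (lt_of_le_of_ne (hgen.1 a b ha.le hb.le) hne.symm) (hA4.1 a b ha hb)

theorem d₁_self_eq_zero (hb : 0 < b) : d₁ b b = 0 := by
  have hmin : IsLocalMin (fun a => (d a b).toReal) b := by
    filter_upwards [eventually_gt_nhds hb] with a ha
    simpa [toReal_gen_self hgen hA4 hb] using hgen.toReal_nonneg ha.le hb.le
  exact hmin.hasDerivAt_eq_zero (hA4.2.1 b b hb hb)

theorem convexOn_toReal_gen (hb : 0 < b) : ConvexOn ℝ (Ioc 0 b) (fun a => (d a b).toReal) := by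
  refine ⟨convex_Ioc 0 b, fun x hx y hy α β hα hβ hαβ => ?_⟩
  obtain rfl : β = 1 - α := by linarith
  have hz : α * x + (1 - α) * y ∈ Ioc 0 b := convex_Ioc 0 b hx hy hα hβ hαβ
  have key := hA4.2.2.2.2 b hb x (Ioc_subset_Icc_self hx) y (Ioc_subset_Icc_self hy) α
    ⟨hα, by linarith⟩
  rw [← coe_toReal_gen hgen hA4 hx.1 hb, ← coe_toReal_gen hgen hA4 hy.1 hb,
    ← coe_toReal_gen hgen hA4 hz.1 hb] at key
  exact_mod_cast key

theorem monotoneOn_d₁ (hb : 0 < b) : MonotoneOn (fun a => d₁ a b) (Ioc 0 b) := by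
  intro x hx y hy hxy
  rcases hxy.eq_or_lt with rfl | hxy
  · rfl
  have hconv := convexOn_toReal_gen hgen hA4 hb
  exact (hconv.le_slope_of_hasDerivAt hx hy hxy (hA4.2.1 x b hx.1 hb)).trans
    (hconv.slope_le_of_hasDerivAt hx hy hxy (hA4.2.1 y b hy.1 hb))

theorem d₁_neg (ha : a ∈ Ioo 0 b) : d₁ a b < 0 := by
  have hb : 0 < b := ha.1.trans ha.2
  calc d₁ a b ≤ slope (fun a => (d a b).toReal) a b :=
        (convexOn_toReal_gen hgen hA4 hb).le_slope_of_hasDerivAt ⟨ha.1, ha.2.le⟩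
          ⟨hb, le_rfl⟩ ha.2 (hA4.2.1 a b ha.1 hb)
    _ < 0 := by
        rw [slope_def_field, toReal_gen_self hgen hA4 hb]
        exact div_neg_of_neg_of_pos (by linarith [toReal_gen_pos hgen hA4 ha.1 hb ha.2.ne])
          (by linarith [ha.2])

theorem d₂_nonneg (ha : a ∈ Ioo 0 b) : 0 ≤ d₂ a b := by
  have hacc : AccPt a (𝓟 (Ioo 0 b)) := by
    simpa using (PerfectSpace.univ_preperfect (α := ℝ)).open_inter
      (isOpen_Ioo (a := 0) (b := b)) a ⟨ha, mem_univ a⟩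
  exact (hA4.2.2.1 a b ha.1 (ha.1.trans ha.2)).hasDerivWithinAt.nonneg_of_monotoneOn hacc
    ((monotoneOn_d₁ hgen hA4 (ha.1.trans ha.2)).mono Ioo_subset_Ioc_self)

theorem strictAntiOn_toReal_gen (hb : 0 < b) :
    StrictAntiOn (fun a => (d a b).toReal) (Ioc 0 b) := by
  refine strictAntiOn_of_deriv_neg (convex_Ioc 0 b)
    (fun x hx => (hA4.2.1 x b hx.1 hb).continuousAt.continuousWithinAt) fun x hx => ?_
  rw [interior_Ioc] at hx
  rw [(hA4.2.1 x b hx.1 hb).deriv]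
  exact d₁_neg hgen hA4 hx

end Generator

section EigenMap

variable {d : ℝ → ℝ → EReal} {d₁ d₂ s : ℝ → ℝ → ℝ} {a b γ : ℝ}

/-- `γ` solved from `2a + γ·d₁(a,b) = 0`: the inverse of `γ ↦ s(γ,b)`. -/
def eigenMapInv (d₁ : ℝ → ℝ → ℝ) (b a : ℝ) : ℝ := -2 * a / d₁ a b

variable (hgen : GenBasic d) (hA4 : Assumption4 d d₁ d₂)
include hgen hA4

theorem exists_root_Ioo (hb : 0 < b) (hγ : 0 < γ) : ∃ a ∈ Ioo 0 b, 2 * a + γ * d₁ a b = 0 := by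
  set m := -d₁ (b / 2) b
  have hm : 0 < m := neg_pos.2 (d₁_neg hgen hA4 ⟨by linarith, by linarith⟩)
  -- `d₁ ≤ -m` on `(0, b/2]`, so `2a + γ d₁(a,b) ≤ 0` as soon as `a ≤ γ m / 2`
  set a₀ := min (b / 2) (γ * m / 2)
  have ha₀ : 0 < a₀ := lt_min (by linarith) (by positivity)
  have ha₀b : a₀ < b := (min_le_left _ _).trans_lt (by linarith)
  have hg₀ : 2 * a₀ + γ * d₁ a₀ b ≤ 0 := by
    have := monotoneOn_d₁ hgen hA4 hb ⟨ha₀, ha₀b.le⟩ ⟨by linarith, by linarith⟩ (min_le_left _ _)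
    nlinarith [min_le_right (b / 2) (γ * m / 2)]
  have hcont : ContinuousOn (fun a => 2 * a + γ * d₁ a b) (Icc a₀ b) := fun x hx =>
    ((continuousAt_const.mul continuousAt_id).add (continuousAt_const.mul
      (hA4.2.2.1 x b (ha₀.trans_le hx.1) hb).continuousAt)).continuousWithinAt
  obtain ⟨c, hc, hc0⟩ := intermediate_value_Icc ha₀b.le hcont
    ⟨hg₀, by simp only [d₁_self_eq_zero hgen hA4 hb]; linarith⟩
  refine ⟨c, ⟨ha₀.trans_le hc.1, hc.2.lt_of_ne ?_⟩, hc0⟩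
  rintro rfl
  simp only [d₁_self_eq_zero hgen hA4 hb] at hc0
  linarith

variable (hs : EigenMapSpec d₁ s)
include hs

theorem eigen_mem_Ioo (hγ : 0 < γ) (hb : 0 < b) : s γ b ∈ Ioo 0 b := by
  obtain ⟨a, ha, hroot⟩ := exists_root_Ioo hgen hA4 hb hγ
  rwa [← (hs.2 γ b hγ hb).2.2 a ha.1.le hroot]

theorem eigenMapInv_eigen (hγ : 0 < γ) (hb : 0 < b) : eigenMapInv d₁ b (s γ b) = γ := by
  have hd₁ := d₁_neg hgen hA4 (eigen_mem_Ioo hgen hA4 hs hγ hb)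
  rw [eigenMapInv, div_eq_iff hd₁.ne]
  linarith [(hs.2 γ b hγ hb).2.1]

omit hs in
theorem eigenMapInv_pos (ha : a ∈ Ioo 0 b) : 0 < eigenMapInv d₁ b a :=
  div_pos_of_neg_of_neg (by linarith [ha.1]) (d₁_neg hgen hA4 ha)

theorem eigen_eigenMapInv (ha : a ∈ Ioo 0 b) : s (eigenMapInv d₁ b a) b = a := by
  have hd₁ := d₁_neg hgen hA4 ha
  refine ((hs.2 _ b (eigenMapInv_pos hgen hA4 ha) (ha.1.trans ha.2)).2.2 a ha.1.le ?_).symm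
  rw [eigenMapInv, div_mul_cancel₀ _ hd₁.ne]
  ring

omit hs in
theorem strictMonoOn_eigenMapInv (hb : 0 < b) : StrictMonoOn (eigenMapInv d₁ b) (Ioo 0 b) := by
  intro x hx y hy hxy
  have hdx := d₁_neg hgen hA4 hx
  have hdy := d₁_neg hgen hA4 hy
  have hmono : d₁ x b ≤ d₁ y b :=
    monotoneOn_d₁ hgen hA4 hb ⟨hx.1, hx.2.le⟩ ⟨hy.1, hy.2.le⟩ hxy.le
  rw [eigenMapInv, eigenMapInv, ← neg_div_neg_eq, ← neg_div_neg_eq (-2 * y),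
    div_lt_div_iff₀ (neg_pos.2 hdx) (neg_pos.2 hdy)]
  nlinarith [hx.1]

theorem strictMonoOn_eigen (hb : 0 < b) : StrictMonoOn (fun γ => s γ b) (Ioi 0) := by
  intro γ₁ h₁ γ₂ h₂ h
  rwa [← (strictMonoOn_eigenMapInv hgen hA4 hb).lt_iff_lt (eigen_mem_Ioo hgen hA4 hs h₁ hb)
    (eigen_mem_Ioo hgen hA4 hs h₂ hb), eigenMapInv_eigen hgen hA4 hs h₁ hb,
    eigenMapInv_eigen hgen hA4 hs h₂ hb]

theorem image_eigen (hb : 0 < b) : (fun γ => s γ b) '' Ioi 0 = Ioo 0 b := by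
  refine Subset.antisymm (image_subset_iff.2 fun γ hγ => eigen_mem_Ioo hgen hA4 hs hγ hb)
    fun a ha => ⟨eigenMapInv d₁ b a, eigenMapInv_pos hgen hA4 ha, eigen_eigenMapInv hgen hA4 hs ha⟩

theorem continuousAt_eigen (hγ : 0 < γ) (hb : 0 < b) : ContinuousAt (fun γ => s γ b) γ :=
  continuousAt_of_monotoneOn_of_image_mem_nhds (strictMonoOn_eigen hgen hA4 hs hb).monotoneOn
    (Ioi_mem_nhds hγ) (image_eigen hgen hA4 hs hb ▸ isOpen_Ioo.mem_nhds
      (eigen_mem_Ioo hgen hA4 hs hγ hb))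

omit hs in
theorem hasDerivAt_eigenMapInv (ha : a ∈ Ioo 0 b) :
    HasDerivAt (eigenMapInv d₁ b) ((-2 * d₁ a b + 2 * a * d₂ a b) / d₁ a b ^ 2) a := by
  have h := ((hasDerivAt_id' a).const_mul (-2 : ℝ)).div (hA4.2.2.1 a b ha.1 (ha.1.trans ha.2))
    (d₁_neg hgen hA4 ha).ne
  exact h.congr_deriv (by ring)

theorem differentiableAt_eigen (hγ : 0 < γ) (hb : 0 < b) :
    DifferentiableAt ℝ (fun γ => s γ b) γ := by
  have hmem := eigen_mem_Ioo hgen hA4 hs hγ hb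
  have hd₁ := d₁_neg hgen hA4 hmem
  have hd₂ := d₂_nonneg hgen hA4 hmem
  refine (HasDerivAt.of_local_left_inverse (continuousAt_eigen hgen hA4 hs hγ hb)
    (hasDerivAt_eigenMapInv hgen hA4 hmem) ?_ ?_).differentiableAt
  · exact (div_pos (by nlinarith [hmem.1]) (pow_two_pos_of_ne_zero hd₁.ne)).ne'
  · filter_upwards [Ioi_mem_nhds hγ] with γ' hγ'
    exact eigenMapInv_eigen hgen hA4 hs hγ' hb

theorem tendsto_eigen_atTop (hb : 0 < b) : Tendsto (fun γ => s γ b) atTop (𝓝 b) := by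
  refine tendsto_order.2 ⟨fun c hc => ?_, fun c hc => ?_⟩
  · have ha : (max c 0 + b) / 2 ∈ Ioo 0 b := ⟨by positivity, by linarith [max_lt hc hb]⟩
    filter_upwards [eventually_gt_atTop (eigenMapInv d₁ b ((max c 0 + b) / 2))] with γ hγ
    have h₀ := eigenMapInv_pos hgen hA4 ha
    calc c < (max c 0 + b) / 2 := by linarith [le_max_left c 0, max_lt hc hb]
      _ = s (eigenMapInv d₁ b ((max c 0 + b) / 2)) b := (eigen_eigenMapInv hgen hA4 hs ha).symm
      _ < s γ b := strictMonoOn_eigen hgen hA4 hs hb h₀ (h₀.trans hγ) hγ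
  · filter_upwards [eventually_gt_atTop 0] with γ hγ
    exact (eigen_mem_Ioo hgen hA4 hs hγ hb).2.trans hc

theorem tendsto_eigen_nhdsGT_zero (hb : 0 < b) :
    Tendsto (fun γ => s γ b) (𝓝[>] 0) (𝓝[>] 0) := by
  refine tendsto_nhdsWithin_iff.2 ⟨tendsto_order.2 ⟨fun c hc => ?_, fun c hc => ?_⟩, ?_⟩
  · filter_upwards [self_mem_nhdsWithin] with γ hγ
    exact hc.trans (eigen_mem_Ioo hgen hA4 hs hγ hb).1
  · have ha : min c b / 2 ∈ Ioo 0 b := ⟨by positivity, by linarith [min_le_right c b]⟩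
    filter_upwards [Ioo_mem_nhdsGT (eigenMapInv_pos hgen hA4 ha)] with γ hγ
    calc s γ b < s (eigenMapInv d₁ b (min c b / 2)) b :=
          strictMonoOn_eigen hgen hA4 hs hb hγ.1 (hγ.1.trans hγ.2) hγ.2
      _ = min c b / 2 := eigen_eigenMapInv hgen hA4 hs ha
      _ < c := by linarith [min_le_left c b, lt_min hc hb]
  · filter_upwards [self_mem_nhdsWithin] with γ hγ
    exact (eigen_mem_Ioo hgen hA4 hs hγ hb).1

end EigenMap

section Summand

variable {d : ℝ → ℝ → EReal} {d₁ d₂ s : ℝ → ℝ → ℝ} {b γ : ℝ}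

theorem EigenMapSpec.eigen_zero_right (hs : EigenMapSpec d₁ s) (γ : ℝ) : s γ 0 = 0 :=
  hs.1 γ 0 (Or.inr rfl)

variable (hgen : GenBasic d) (hA4 : Assumption4 d d₁ d₂) (hs : EigenMapSpec d₁ s)
include hgen hA4 hs

theorem coe_toReal_gen_eigen (hb : 0 ≤ b) (hbb : d b b ≠ ⊤) (hγ : 0 < γ) :
    ((d (s γ b) b).toReal : EReal) = d (s γ b) b := by
  rcases hb.eq_or_lt with rfl | hb
  · simp [hs.eigen_zero_right, hgen.self_eq_zero le_rfl hbb]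
  · exact coe_toReal_gen hgen hA4 (eigen_mem_Ioo hgen hA4 hs hγ hb).1 hb

theorem differentiableAt_toReal_gen_eigen (hb : 0 ≤ b) (hγ : 0 < γ) :
    DifferentiableAt ℝ (fun γ => (d (s γ b) b).toReal) γ := by
  rcases hb.eq_or_lt with rfl | hb
  · simp only [hs.eigen_zero_right]
    exact differentiableAt_const _
  · exact (hA4.2.1 _ b (eigen_mem_Ioo hgen hA4 hs hγ hb).1 hb).differentiableAt.comp γ
      (differentiableAt_eigen hgen hA4 hs hγ hb)

theorem strictAntiOn_toReal_gen_eigen (hb : 0 < b) :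
    StrictAntiOn (fun γ => (d (s γ b) b).toReal) (Ioi 0) :=
  (strictAntiOn_toReal_gen hgen hA4 hb).comp_strictMonoOn (strictMonoOn_eigen hgen hA4 hs hb)
    fun _ hγ => Ioo_subset_Ioc_self (eigen_mem_Ioo hgen hA4 hs hγ hb)

theorem antitoneOn_toReal_gen_eigen (hb : 0 ≤ b) :
    AntitoneOn (fun γ => (d (s γ b) b).toReal) (Ioi 0) := by
  rcases hb.eq_or_lt with rfl | hb
  · simp only [hs.eigen_zero_right]
    exact antitoneOn_const
  · exact (strictAntiOn_toReal_gen_eigen hgen hA4 hs hb).antitoneOn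

theorem tendsto_toReal_gen_eigen_atTop (hb : 0 ≤ b) (hbb : d b b ≠ ⊤) :
    Tendsto (fun γ => (d (s γ b) b).toReal) atTop (𝓝 0) := by
  rcases hb.eq_or_lt with rfl | hb
  · simp only [hs.eigen_zero_right, hgen.self_eq_zero le_rfl hbb, EReal.toReal_zero]
    exact tendsto_const_nhds
  · rw [← toReal_gen_self hgen hA4 hb]
    exact (hA4.2.1 b b hb hb).continuousAt.tendsto.comp (tendsto_eigen_atTop hgen hA4 hs hb)

theorem tendsto_gen_eigen_nhdsGT_zero (hb : 0 ≤ b) :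
    Tendsto (fun γ => d (s γ b) b) (𝓝[>] 0) (𝓝 (d 0 b)) := by
  rcases hb.eq_or_lt with rfl | hb
  · simp only [hs.eigen_zero_right]
    exact tendsto_const_nhds
  · exact ((hgen.2.2 b hb 0 self_mem_Ici).mono Ioi_subset_Ici_self).tendsto.comp
      (tendsto_eigen_nhdsGT_zero hgen hA4 hs hb)

end Summand

theorem sum_gen_eigen_eq_coe {p : ℕ} {d : ℝ → ℝ → EReal} {d₁ d₂ s : ℝ → ℝ → ℝ}
    {xh : Fin p → ℝ} {γ : ℝ} (hgen : GenBasic d) (hA4 : Assumption4 d d₁ d₂)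
    (hs : EigenMapSpec d₁ s) (hnn : ∀ i, 0 ≤ xh i) (hfin : ∀ i, d (xh i) (xh i) ≠ ⊤)
    (hγ : 0 < γ) :
    ∑ i, d (s γ (xh i)) (xh i) = ((∑ i, (d (s γ (xh i)) (xh i)).toReal : ℝ) : EReal) := by
  rw [EReal.coe_finsetSum]
  exact Finset.sum_congr rfl fun i _ => (coe_toReal_gen_eigen hgen hA4 hs (hnn i) (hfin i) hγ).symm

theorem Assumption3.exists_pos {p : ℕ} {d : ℝ → ℝ → EReal} {xh : Fin p → ℝ} {ε : ℝ}
    (hA3 : Assumption3 d xh ε) (hgen : GenBasic d) (hnn : ∀ i, 0 ≤ xh i) : ∃ j, 0 < xh j := by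
  by_contra! hle
  have hzero : ∀ i, d 0 (xh i) = 0 := fun i => by
    have hi : xh i = 0 := (hle i).antisymm (hnn i)
    have := hgen.self_eq_zero le_rfl (hi ▸ hA3.1 i)
    rwa [hi]
  have hlt := hA3.2.2
  simp only [hzero, Finset.sum_const_zero] at hlt
  exact hlt.not_gt (EReal.coe_pos.2 hA3.2.1)

theorem stmt_4_general {p : ℕ}
    (d : ℝ → ℝ → EReal) (d₁ d₂ s : ℝ → ℝ → ℝ)
    (xh : Fin p → ℝ) (ε : ℝ)
    (hnn : ∀ i, 0 ≤ xh i)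
    (hgen : GenBasic d)
    (hA3 : Assumption3 d xh ε)
    (hA4 : Assumption4 d d₁ d₂)
    (hs : EigenMapSpec d₁ s) :
    (∀ γ : ℝ, 0 < γ →
      DifferentiableAt ℝ (fun γ' => (∑ i, d (s γ' (xh i)) (xh i)).toReal - ε) γ) ∧
    StrictAntiOn (fun γ => (∑ i, d (s γ (xh i)) (xh i)).toReal - ε) (Set.Ioi 0) ∧
    (∃ L : EReal, 0 < L ∧
      Tendsto (fun γ => (((∑ i, d (s γ (xh i)) (xh i)).toReal - ε : ℝ) : EReal))
        (nhdsWithin 0 (Set.Ioi 0)) (nhds L)) ∧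
    (∃ L : EReal, L < 0 ∧
      Tendsto (fun γ => (((∑ i, d (s γ (xh i)) (xh i)).toReal - ε : ℝ) : EReal))
        atTop (nhds L)) := by
  obtain ⟨j, hj⟩ := hA3.exists_pos hgen hnn
  obtain ⟨hfin, hε, hεlt⟩ := hA3
  have hsum := fun γ (hγ : 0 < γ) => sum_gen_eigen_eq_coe hgen hA4 hs hnn hfin hγ
  have hF : ∀ γ, 0 < γ → (∑ i, d (s γ (xh i)) (xh i)).toReal
      = ∑ i, (d (s γ (xh i)) (xh i)).toReal := fun γ hγ => by rw [hsum γ hγ, EReal.toReal_coe]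
  refine ⟨fun γ hγ => ?_, fun γ₁ h₁ γ₂ h₂ h => ?_,
    ⟨∑ i, d 0 (xh i) - ε, EReal.sub_pos.2 hεlt, ?_⟩,
    ⟨((-ε : ℝ) : EReal), by exact_mod_cast neg_neg_of_pos hε, ?_⟩⟩
  · refine ((DifferentiableAt.fun_sum (u := Finset.univ) fun i _ =>
      differentiableAt_toReal_gen_eigen hgen hA4 hs (hnn i) hγ).sub_const ε).congr_of_eventuallyEq
      ?_
    filter_upwards [Ioi_mem_nhds hγ] with γ' hγ'
    rw [hF γ' hγ']
  · simp only [hF γ₁ h₁, hF γ₂ h₂]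
    exact sub_lt_sub_right (Finset.sum_lt_sum
      (fun i _ => antitoneOn_toReal_gen_eigen hgen hA4 hs (hnn i) h₁ h₂ h.le)
      ⟨j, Finset.mem_univ j, strictAntiOn_toReal_gen_eigen hgen hA4 hs hj h₁ h₂ h⟩) ε
  · refine (EReal.tendsto_sub_coe (EReal.tendsto_finsetSum _
      (fun i _ => tendsto_gen_eigen_nhdsGT_zero hgen hA4 hs (hnn i))
      fun i _ => hgen.ne_bot le_rfl (hnn i)) ε).congr' ?_
    filter_upwards [self_mem_nhdsWithin] with γ hγ
    rw [hsum γ hγ, EReal.toReal_coe, EReal.coe_sub]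
  · rw [EReal.tendsto_coe]
    have h := (tendsto_finsetSum Finset.univ fun i _ =>
      tendsto_toReal_gen_eigen_atTop hgen hA4 hs (hnn i) (hfin i)).sub_const ε
    rw [Finset.sum_const_zero, zero_sub] at h
    refine h.congr' ?_
    filter_upwards [eventually_gt_atTop 0] with γ hγ
    rw [hF γ hγ]

/-- Proposition 4: structural properties of `F`.
Under Assumptions 2, 3 and 4, the function `F(γ) = Σᵢ d(s(γ,x̂ᵢ),x̂ᵢ) − ε` is
differentiable and strictly decreasing on `(0,∞)`; moreover its limit as `γ → 0⁺`
is positive (possibly `+∞`) and its limit as `γ → ∞` is negative. -/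
theorem stmt_4 {p : ℕ}
    (d : ℝ → ℝ → EReal) (d₁ d₂ s : ℝ → ℝ → ℝ)
    (xh : Fin p → ℝ) (ε : ℝ)
    (hmono : Monotone xh) (hnn : ∀ i, 0 ≤ xh i)
    (hgen : GenBasic d)
    (hA3 : Assumption3 d xh ε)
    (hA4 : Assumption4 d d₁ d₂)
    (hs : EigenMapSpec d₁ s) :
    (∀ γ : ℝ, 0 < γ →
      DifferentiableAt ℝ (fun γ' => (∑ i, d (s γ' (xh i)) (xh i)).toReal - ε) γ) ∧
    StrictAntiOn (fun γ => (∑ i, d (s γ (xh i)) (xh i)).toReal - ε) (Set.Ioi 0) ∧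
    (∃ L : EReal, 0 < L ∧
      Tendsto (fun γ => (((∑ i, d (s γ (xh i)) (xh i)).toReal - ε : ℝ) : EReal))
        (nhdsWithin 0 (Set.Ioi 0)) (nhds L)) ∧
    (∃ L : EReal, L < 0 ∧
      Tendsto (fun γ => (((∑ i, d (s γ (xh i)) (xh i)).toReal - ε : ℝ) : EReal))
        atTop (nhds L)) :=
  stmt_4_general d d₁ d₂ s xh ε hnn hgen hA3 hA4 hs
end
end

section
/- Let (Ω,𝓕,ℙ) be a probability space, let Σ̂_n : Ω → 𝕊₊ᵖ be measurable with Σ̂_n → Σ₀ ∈ 𝕊₊ᵖ ℙ-almost surely, and let ε_n > 0 with ε_n → 0. Suppose the divergence D satisfies Assumption 2, the generator d is (jointly) continuous on ℝ₊ × (0,∞), and for every n, ℙ-almost surely Assumptions 1, 3 and 4 hold for the nominal matrix Σ̂_n and radius ε_n. Let X*_n denote the unique minimizer of the primal problem (CSE) with nominal matrix Σ̂_n and radius ε_n. Then X*_n → Σ₀ ℙ-almost surely (in Frobenius norm). -/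
open Matrix Set Filter MeasureTheory
open scoped BigOperators Classical

noncomputable section

/-!
Diagonalize `Σ̂ₙ = Vₙ Diag(μₙ) Vₙᵀ` with sorted eigenvalues. By the minimax equality the
worst-case loss of `X*ₙ` is at most `-min {‖Σ‖² : Σ feasible}`, and by the rearrangement property
this minimum is attained up to `εₙ` by a feasible `Σₙ = Vₙ Diag(sₙ) Vₙᵀ`. As the loss at `Σₙ` is
`‖X*ₙ - Σₙ‖² - ‖Σₙ‖²`, this gives `‖X*ₙ - Σₙ‖² ≤ εₙ`. Feasibility of `Σ̂ₙ` itself gives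
`‖sₙ‖² ≤ ‖μₙ‖² + εₙ`, while `∑ᵢ d(sₙᵢ, μₙᵢ) ≤ εₙ → 0`; by compactness and continuity of `d`,
`sₙ - μₙ → 0`, i.e. `Σₙ - Σ̂ₙ → 0`. Together with `Σ̂ₙ → Σ₀` this gives `X*ₙ → Σ₀`.
-/

open scoped Topology

section Matrices

variable {p : ℕ}

lemma frobSq_nonneg (A : Mat p) : 0 ≤ frobSq A := by
  simpa [frobSq, conjTranspose_eq_transpose_of_trivial] using
    (posSemidef_conjTranspose_mul_self A).trace_nonneg

lemma frobSq_add_add_frobSq_sub (A B : Mat p) :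
    frobSq (A + B) + frobSq (A - B) = 2 * frobSq A + 2 * frobSq B := by
  simp only [frobSq, transpose_add, transpose_sub, Matrix.add_mul, Matrix.mul_add,
    Matrix.sub_mul, Matrix.mul_sub, trace_add, trace_sub]
  ring

lemma frobSq_add_le (A B : Mat p) : frobSq (A + B) ≤ 2 * frobSq A + 2 * frobSq B := by
  linarith [frobSq_add_add_frobSq_sub A B, frobSq_nonneg (A - B)]

lemma tendsto_frobSq_add {α : Type*} {l : Filter α} {A B : α → Mat p}
    (hA : Tendsto (fun n => frobSq (A n)) l (𝓝 0)) (hB : Tendsto (fun n => frobSq (B n)) l (𝓝 0)) :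
    Tendsto (fun n => frobSq (A n + B n)) l (𝓝 0) :=
  squeeze_zero (fun _ => frobSq_nonneg _) (fun _ => frobSq_add_le _ _) <| by
    simpa using (hA.const_mul 2).add (hB.const_mul 2)

lemma frobSq_diagonal (w : Fin p → ℝ) : frobSq (diagonal w) = ∑ i, w i ^ 2 := by
  simp [frobSq, sq]

lemma cseLoss_eq_frobSq_sub {X S : Mat p} (hX : Xᵀ = X) (hS : Sᵀ = S) :
    cseLoss X S = frobSq (X - S) - frobSq S := by
  simp only [cseLoss, frobSq, transpose_sub, hX, hS, Matrix.sub_mul, Matrix.mul_sub, trace_sub,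
    trace_mul_comm X S]
  ring

lemma IsOrthoMat.transpose_mul_self {V : Mat p} (hV : IsOrthoMat V) : Vᵀ * V = 1 :=
  mul_eq_one_comm.mp hV

lemma IsOrthoMat.transpose {V : Mat p} (hV : IsOrthoMat V) : IsOrthoMat Vᵀ := by
  rw [IsOrthoMat, transpose_transpose, hV.transpose_mul_self]

lemma IsOrthoMat.mul {V W : Mat p} (hV : IsOrthoMat V) (hW : IsOrthoMat W) :
    IsOrthoMat (V * W) := by
  rw [IsOrthoMat, transpose_mul, ← mul_assoc, mul_assoc V W, hW, mul_one, hV]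

lemma IsOrthoMat.transpose_conj {V : Mat p} (hV : IsOrthoMat V) (B : Mat p) :
    Vᵀ * (V * B * Vᵀ) * V = B := by
  simp only [← mul_assoc, hV.transpose_mul_self, one_mul]
  rw [mul_assoc, hV.transpose_mul_self, mul_one]

lemma IsOrthoMat.frobSq_conj {V : Mat p} (hV : IsOrthoMat V) (B : Mat p) :
    frobSq (V * B * Vᵀ) = frobSq B := by
  have h : (V * B * Vᵀ)ᵀ * (V * B * Vᵀ) = V * (Bᵀ * B * Vᵀ) := by
    simp only [transpose_mul, transpose_transpose, mul_assoc]
    rw [← mul_assoc Vᵀ V, hV.transpose_mul_self, one_mul]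
  rw [frobSq, h, trace_mul_comm, mul_assoc, hV.transpose_mul_self, mul_one, frobSq]

lemma IsOrthoMat.frobSq_conj_diagonal_sub {V : Mat p} (hV : IsOrthoMat V) (s μ : Fin p → ℝ) :
    frobSq (V * diagonal s * Vᵀ - V * diagonal μ * Vᵀ) = ∑ i, (s i - μ i) ^ 2 := by
  rw [← Matrix.sub_mul, ← Matrix.mul_sub, diagonal_sub, hV.frobSq_conj, frobSq_diagonal]

lemma Matrix.PosSemidef.transpose_eq {A : Mat p} (hA : A.PosSemidef) : Aᵀ = A := by
  simpa [IsHermitian, conjTranspose_eq_transpose_of_trivial] using hA.1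

lemma Matrix.PosSemidef.mul_mul_transpose_same {A : Mat p} (hA : A.PosSemidef) (M : Mat p) :
    (M * A * Mᵀ).PosSemidef := by
  simpa [conjTranspose_eq_transpose_of_trivial] using hA.mul_mul_conjTranspose_same M

end Matrices

section Spectral

variable {p : ℕ}

lemma Matrix.PosSemidef.exists_sorted_diagonalization {A : Mat p} (hA : A.PosSemidef) :
    ∃ (V : Mat p) (μ : Fin p → ℝ) (σ : Equiv.Perm (Fin p)),
      IsOrthoMat V ∧ Monotone μ ∧ (∀ i, 0 ≤ μ i) ∧ μ = hA.1.eigenvalues ∘ σ ∧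
      A = V * diagonal μ * Vᵀ := by
  set W : Mat p := (hA.1.eigenvectorUnitary : Mat p)
  have hW : IsOrthoMat W := by
    simpa [IsOrthoMat, star_eq_conjTranspose, conjTranspose_eq_transpose_of_trivial] using
      mem_unitaryGroup_iff.mp hA.1.eigenvectorUnitary.2
  have hspec : A = W * diagonal hA.1.eigenvalues * Wᵀ := by
    simpa [Unitary.conjStarAlgAut_apply, star_eq_conjTranspose,
      conjTranspose_eq_transpose_of_trivial] using hA.1.spectral_theorem
  set σ := Tuple.sort hA.1.eigenvalues
  set Q : Mat p := σ.symm.toPEquiv.toMatrix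
  have hQT : Qᵀ = σ.toPEquiv.toMatrix := by
    rw [← PEquiv.toMatrix_symm, Equiv.toPEquiv_symm, PEquiv.symm_symm]
  have hQ : IsOrthoMat Q := by
    rw [IsOrthoMat, hQT, ← PEquiv.toMatrix_trans, ← Equiv.toPEquiv_trans]
    simp
  have hsort : Q * diagonal (hA.1.eigenvalues ∘ σ) * Qᵀ = diagonal hA.1.eigenvalues := by
    rw [hQT, PEquiv.toMatrix_toPEquiv_mul, PEquiv.mul_toMatrix_toPEquiv, submatrix_submatrix,
      Function.comp_id, Function.id_comp, submatrix_diagonal_equiv]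
    simp [Function.comp_assoc]
  refine ⟨W * Q, hA.1.eigenvalues ∘ σ, σ, hW.mul hQ, Tuple.monotone_sort _,
    fun i => hA.eigenvalues_nonneg _, rfl, ?_⟩
  rw [transpose_mul, show W * Q * diagonal (hA.1.eigenvalues ∘ σ) * (Qᵀ * Wᵀ)
    = W * (Q * diagonal (hA.1.eigenvalues ∘ σ) * Qᵀ) * Wᵀ by simp only [mul_assoc], hsort]
  exact hspec

end Spectral

section Divergence

variable {p : ℕ} {D : Mat p → Mat p → EReal} {d : ℝ → ℝ → EReal}

/-- On constant diagonal matrices `D` is `p` times the generator, which transfers the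
divergence axioms from `D` to `d`. -/
theorem Assumption2.genBasic (hp : 0 < p) (hD : DivergenceBasic D) (hA2 : Assumption2 D d) :
    GenBasic d := by
  have hconst : ∀ a b : ℝ, 0 ≤ a → 0 ≤ b →
      D (diagonal fun _ : Fin p => a) (diagonal fun _ => b) = p • d a b := fun a b ha hb => by
    rw [hA2.2.1 _ _ (fun _ => ha) (fun _ => hb), Finset.sum_const, Finset.card_univ,
      Fintype.card_fin]
  have hpsd : ∀ a : ℝ, 0 ≤ a → (diagonal fun _ : Fin p => a).PosSemidef := fun a ha =>
    posSemidef_diagonal_iff.2 fun _ => ha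
  have hnonneg : ∀ a b : ℝ, 0 ≤ a → 0 ≤ b → 0 ≤ d a b := fun a b ha hb =>
    (nsmul_nonneg_iff hp.ne').1 (hconst a b ha hb ▸ hD.1 _ _)
  refine ⟨hnonneg, fun a b ha hb hfin => ⟨fun h0 => ?_, ?_⟩, hA2.2.2.1⟩
  · have hD0 : D (diagonal fun _ : Fin p => a) (diagonal fun _ => b) = 0 := by
      rw [hconst a b ha hb, h0, nsmul_zero]
    have := (hD.2 _ _ (hpsd a ha) (hpsd b hb) (by simp [hD0])).1 hD0
    exact congrFun (diagonal_injective this) ⟨0, hp⟩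
  · rintro rfl
    obtain ⟨r, hr⟩ : ∃ r : ℝ, d a a = r :=
      ⟨_, (EReal.coe_toReal hfin (ne_bot_of_le_ne_bot (by simp) (hnonneg a a ha ha))).symm⟩
    have hfin' : D (diagonal fun _ : Fin p => a) (diagonal fun _ => a) ≠ ⊤ := by
      rw [hconst a a ha ha, hr, ← EReal.coe_nsmul]
      exact EReal.coe_ne_top _
    have h0 := (hD.2 _ _ (hpsd a ha) (hpsd a ha) hfin').2 rfl
    rw [hconst a a ha ha, hr, ← EReal.coe_nsmul, EReal.coe_eq_zero, nsmul_eq_mul,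
      mul_eq_zero] at h0
    rw [hr, h0.resolve_left (by exact_mod_cast hp.ne'), EReal.coe_zero]

lemma Assumption2.feas_conj_diagonal (hA2 : Assumption2 D d) {V : Mat p} (hV : IsOrthoMat V)
    {μ s : Fin p → ℝ} (hμ0 : ∀ i, 0 ≤ μ i) (hs0 : ∀ i, 0 ≤ s i) {ε : ℝ}
    (hsd : ∑ i, d (s i) (μ i) ≤ (ε : EReal)) :
    Feas D (V * diagonal μ * Vᵀ) ε (V * diagonal s * Vᵀ) := by
  have hs : (diagonal s).PosSemidef := posSemidef_diagonal_iff.2 hs0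
  refine ⟨hs.mul_mul_transpose_same V, ?_⟩
  rwa [← hA2.1 _ _ hs (posSemidef_diagonal_iff.2 hμ0) V hV, hA2.2.1 s μ hs0 hμ0]

/-- Rotate `T` into the eigenbasis of the nominal matrix and diagonalize it: by the
rearrangement inequality (c) this only decreases the divergence. -/
lemma Assumption2.exists_sum_sq_eq_frobSq_of_feas (hA2 : Assumption2 D d) {V : Mat p}
    (hV : IsOrthoMat V) {μ : Fin p → ℝ} (hμm : Monotone μ) (hμ0 : ∀ i, 0 ≤ μ i) {ε : ℝ}
    {T : Mat p} (hT : Feas D (V * diagonal μ * Vᵀ) ε T) :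
    ∃ t : Fin p → ℝ, (∀ i, 0 ≤ t i) ∧ ∑ i, d (t i) (μ i) ≤ (ε : EReal) ∧
      frobSq T = ∑ i, t i ^ 2 := by
  have hμ : (diagonal μ).PosSemidef := posSemidef_diagonal_iff.2 hμ0
  have hB : (Vᵀ * T * V).PosSemidef := by
    simpa using hT.1.mul_mul_transpose_same Vᵀ
  obtain ⟨U, t, -, hU, htm, ht0, -, hBdec⟩ := hB.exists_sorted_diagonalization
  refine ⟨t, ht0, ?_, ?_⟩
  · have hrot := hA2.1 T _ hT.1 (hμ.mul_mul_transpose_same V) Vᵀ hV.transpose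
    rw [transpose_transpose, hV.transpose_conj, hBdec] at hrot
    calc ∑ i, d (t i) (μ i) = D (diagonal t) (diagonal μ) := (hA2.2.1 t μ ht0 hμ0).symm
      _ ≤ D (U * diagonal t * Uᵀ) (diagonal μ) := (hA2.2.2.2 t μ htm hμm ht0 hμ0 U hU).1
      _ = D T (V * diagonal μ * Vᵀ) := hrot.symm
      _ ≤ ε := hT.2
  · rw [← hV.transpose.frobSq_conj T, transpose_transpose, hBdec, hU.frobSq_conj,
      frobSq_diagonal]

end Divergence

section Minimizer

variable {p : ℕ} {D : Mat p → Mat p → EReal} {d : ℝ → ℝ → EReal}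

lemma dualVal_le_neg_frobSq {S : Mat p} (hS : S.PosSemidef) :
    dualVal S ≤ ((-frobSq S : ℝ) : EReal) := by
  refine (iInf_le _ ⟨S, hS⟩).trans_eq ?_
  simp [cseLoss_eq_frobSq_sub hS.transpose_eq hS.transpose_eq, frobSq]

/-- The minimax equality squeezes the worst-case loss of a minimizer `X` between
`‖X - S‖² - ‖S‖²` for feasible `S` and `-m` for a lower bound `m` on feasible `‖T‖²`. -/
lemma IsCSESol.frobSq_sub_le {Sh X S : Mat p} {ε m : ℝ} (hmm : MinimaxEq D Sh ε)
    (hX : IsCSESol D Sh ε X) (hS : Feas D Sh ε S) (hm : ∀ T, Feas D Sh ε T → m ≤ frobSq T) :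
    frobSq (X - S) ≤ frobSq S - m := by
  have hup : primalVal D Sh ε X ≤ ((-m : ℝ) : EReal) := calc
    primalVal D Sh ε X ≤ ⨅ Y : {Y : Mat p // Y.PosSemidef}, primalVal D Sh ε Y.1 :=
      le_iInf fun Y => hX.2 Y.1 Y.2
    _ = ⨆ T : {T : Mat p // Feas D Sh ε T}, dualVal T.1 := hmm
    _ ≤ ((-m : ℝ) : EReal) := iSup_le fun T =>
      (dualVal_le_neg_frobSq T.2.1).trans (EReal.coe_le_coe_iff.2 (neg_le_neg (hm T.1 T.2)))
  have hlow : ((cseLoss X S : ℝ) : EReal) ≤ primalVal D Sh ε X :=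
    le_iSup (fun T : {T : Mat p // Feas D Sh ε T} => ((cseLoss X T.1 : ℝ) : EReal)) ⟨S, hS⟩
  have h := EReal.coe_le_coe_iff.1 (hlow.trans hup)
  rw [cseLoss_eq_frobSq_sub hX.1.transpose_eq hS.1.transpose_eq] at h
  linarith

/-- `s` is an `ε`-minimizer of `∑ tᵢ²` over the feasible vectors, hence, by rearrangement, of
`‖T‖²` over the feasible matrices. -/
theorem IsCSESol.exists_conj_diagonal_near (hA2 : Assumption2 D d) {Sh X V : Mat p}
    {μ : Fin p → ℝ} (hV : IsOrthoMat V) (hμm : Monotone μ) (hμ0 : ∀ i, 0 ≤ μ i)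
    (hdec : Sh = V * diagonal μ * Vᵀ) {ε : ℝ} (hε : 0 < ε)
    (hμd : ∑ i, d (μ i) (μ i) ≤ (ε : EReal)) (hmm : MinimaxEq D Sh ε)
    (hX : IsCSESol D Sh ε X) :
    ∃ s : Fin p → ℝ, (∀ i, 0 ≤ s i) ∧ ∑ i, d (s i) (μ i) ≤ (ε : EReal) ∧
      ∑ i, s i ^ 2 ≤ ∑ i, μ i ^ 2 + ε ∧ frobSq (X - V * diagonal s * Vᵀ) ≤ ε := by
  subst hdec
  set F := {t : Fin p → ℝ | (∀ i, 0 ≤ t i) ∧ ∑ i, d (t i) (μ i) ≤ (ε : EReal)}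
  set m := sInf ((fun t : Fin p → ℝ => ∑ i, t i ^ 2) '' F)
  have hbdd : BddBelow ((fun t : Fin p → ℝ => ∑ i, t i ^ 2) '' F) :=
    ⟨0, by rintro _ ⟨t, -, rfl⟩; positivity⟩
  have hμF : ∑ i, μ i ^ 2 ∈ (fun t : Fin p → ℝ => ∑ i, t i ^ 2) '' F := ⟨μ, ⟨hμ0, hμd⟩, rfl⟩
  obtain ⟨_, ⟨s, ⟨hs0, hsd⟩, rfl⟩, hsm⟩ :=
    exists_lt_of_csInf_lt ⟨_, hμF⟩ (lt_add_of_pos_right m hε)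
  have hm : ∀ T, Feas D (V * diagonal μ * Vᵀ) ε T → m ≤ frobSq T := fun T hT => by
    obtain ⟨t, ht0, htd, hTt⟩ := hA2.exists_sum_sq_eq_frobSq_of_feas hV hμm hμ0 hT
    exact hTt ▸ csInf_le hbdd ⟨t, ⟨ht0, htd⟩, rfl⟩
  refine ⟨s, hs0, hsd, ?_, ?_⟩
  · linarith [csInf_le hbdd hμF]
  · have h := hX.frobSq_sub_le hmm (hA2.feas_conj_diagonal hV hμ0 hs0 hsd) hm
    rw [hV.frobSq_conj, frobSq_diagonal] at h
    linarith

end Minimizer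

section Limits

variable {ι : Type*} [Fintype ι] {d : ℝ → ℝ → EReal}

lemma eq_of_sum_sq_le_of_eq_of_pos {x y : ι → ℝ} (hx : ∀ i, 0 ≤ x i) (hy : ∀ i, 0 ≤ y i)
    (hpos : ∀ i, 0 < y i → x i = y i) (hsq : ∑ i, x i ^ 2 ≤ ∑ i, y i ^ 2) : x = y := by
  have hterm : ∀ i ∈ Finset.univ, 0 ≤ x i ^ 2 - y i ^ 2 := fun i _ => by
    rcases (hy i).lt_or_eq with h | h
    · rw [hpos i h, sub_self]
    · rw [← h]; simp [sq_nonneg]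
  have hsum : ∑ i, (x i ^ 2 - y i ^ 2) = 0 :=
    le_antisymm (by rw [Finset.sum_sub_distrib]; linarith) (Finset.sum_nonneg hterm)
  funext i
  have hi := (Finset.sum_eq_zero_iff_of_nonneg hterm).1 hsum i (Finset.mem_univ i)
  exact (pow_left_inj₀ (hx i) (hy i) two_ne_zero).1 (sub_eq_zero.1 hi)

lemma norm_le_sqrt_of_sum_sq_le {x : ι → ℝ} {C : ℝ} (h : ∑ i, x i ^ 2 ≤ C) : ‖x‖ ≤ √C :=
  (pi_norm_le_iff_of_nonneg (Real.sqrt_nonneg C)).2 fun i =>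
    Real.abs_le_sqrt <|
      (Finset.single_le_sum (fun j _ => sq_nonneg (x j)) (Finset.mem_univ i)).trans h

lemma GenBasic.eq_of_tendsto (hd : GenBasic d)
    (hdcont : ContinuousOn (fun q : ℝ × ℝ => d q.1 q.2) (Ici 0 ×ˢ Ioi 0))
    {a b ε : ℕ → ℝ} {a₀ b₀ : ℝ} (ha : Tendsto a atTop (𝓝 a₀)) (hb : Tendsto b atTop (𝓝 b₀))
    (hε : Tendsto ε atTop (𝓝 0)) (ha0 : ∀ n, 0 ≤ a n) (hb₀ : 0 < b₀)
    (hdε : ∀ n, d (a n) (b n) ≤ (ε n : EReal)) : a₀ = b₀ := by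
  have ha₀ : 0 ≤ a₀ := ge_of_tendsto' ha ha0
  have hab : Tendsto (fun n => (a n, b n)) atTop (𝓝[Ici 0 ×ˢ Ioi 0] (a₀, b₀)) :=
    tendsto_nhdsWithin_iff.2 ⟨ha.prodMk_nhds hb,
      (hb.eventually (eventually_gt_nhds hb₀)).mono fun n hn => ⟨ha0 n, hn⟩⟩
  have hle : d a₀ b₀ ≤ 0 :=
    le_of_tendsto_of_tendsto' ((hdcont (a₀, b₀) ⟨ha₀, hb₀⟩).tendsto.comp hab)
      (by simpa using EReal.tendsto_coe.2 hε) hdε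
  have h0 : d a₀ b₀ = 0 := le_antisymm hle (hd.1 _ _ ha₀ hb₀.le)
  exact (hd.2.1 _ _ ha₀ hb₀.le (by simp [h0])).1 h0

/-- Compactness: along a subsequence both bounded sequences converge; the limits agree where the
nominal limit is positive (continuity of `d`), and then everywhere since the norms compare. -/
theorem GenBasic.tendsto_sum_sq_sub (hd : GenBasic d)
    (hdcont : ContinuousOn (fun q : ℝ × ℝ => d q.1 q.2) (Ici 0 ×ˢ Ioi 0))
    {s μ : ℕ → ι → ℝ} {ε : ℕ → ℝ} (hε : Tendsto ε atTop (𝓝 0))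
    (hs0 : ∀ n i, 0 ≤ s n i) (hμ0 : ∀ n i, 0 ≤ μ n i)
    (hμb : BddAbove (range fun n => ∑ i, μ n i ^ 2))
    (hsd : ∀ n, ∑ i, d (s n i) (μ n i) ≤ (ε n : EReal))
    (hsq : ∀ n, ∑ i, s n i ^ 2 ≤ ∑ i, μ n i ^ 2 + ε n) :
    Tendsto (fun n => ∑ i, (s n i - μ n i) ^ 2) atTop (𝓝 0) := by
  obtain ⟨C, hC⟩ := hμb
  obtain ⟨E, hE⟩ := hε.bddAbove_range
  have hbdd : Bornology.IsBounded (range fun n => (s n, μ n)) := by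
    refine isBounded_iff_forall_norm_le.2 ⟨max √(C + E) √C, ?_⟩
    rintro _ ⟨n, rfl⟩
    have hμn : ∑ i, μ n i ^ 2 ≤ C := hC ⟨n, rfl⟩
    have hεn : ε n ≤ E := hE ⟨n, rfl⟩
    exact norm_prod_le_iff.2
      ⟨(norm_le_sqrt_of_sum_sq_le (by linarith [hsq n])).trans (le_max_left _ _),
        (norm_le_sqrt_of_sum_sq_le hμn).trans (le_max_right _ _)⟩
  refine tendsto_of_subseq_tendsto fun ns hns => ?_
  obtain ⟨l, -, φ, hφ, hl⟩ := tendsto_subseq_of_bounded hbdd fun k => mem_range_self (ns k)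
  refine ⟨φ, ?_⟩
  have hεφ : Tendsto (fun k => ε (ns (φ k))) atTop (𝓝 0) := hε.comp (hns.comp hφ.tendsto_atTop)
  have hsl : ∀ i, Tendsto (fun k => s (ns (φ k)) i) atTop (𝓝 (l.1 i)) :=
    tendsto_pi_nhds.1 ((continuous_fst.tendsto l).comp hl)
  have hμl : ∀ i, Tendsto (fun k => μ (ns (φ k)) i) atTop (𝓝 (l.2 i)) :=
    tendsto_pi_nhds.1 ((continuous_snd.tendsto l).comp hl)
  have hdi : ∀ n i, d (s n i) (μ n i) ≤ (ε n : EReal) := fun n i =>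
    (Finset.single_le_sum (fun j _ => hd.1 _ _ (hs0 n j) (hμ0 n j)) (Finset.mem_univ i)).trans
      (hsd n)
  have hsq_lim : ∑ i, l.1 i ^ 2 ≤ ∑ i, l.2 i ^ 2 := by
    simpa using le_of_tendsto_of_tendsto' (tendsto_finsetSum _ fun i _ => (hsl i).pow 2)
      ((tendsto_finsetSum _ fun i _ => (hμl i).pow 2).add hεφ) fun k => hsq _
  have hl : l.1 = l.2 :=
    eq_of_sum_sq_le_of_eq_of_pos (fun i => ge_of_tendsto' (hsl i) fun k => hs0 _ i)
      (fun i => ge_of_tendsto' (hμl i) fun k => hμ0 _ i)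
      (fun i hi => hd.eq_of_tendsto hdcont (hsl i) (hμl i) hεφ (fun k => hs0 _ i) hi
        fun k => hdi _ i)
      hsq_lim
  simpa [hl] using tendsto_finsetSum _ fun i _ => ((hsl i).sub (hμl i)).pow 2

end Limits

theorem tendsto_frobSq_sub_of_isCSESol {p : ℕ} {D : Mat p → Mat p → EReal}
    {d : ℝ → ℝ → EReal} (hD : DivergenceBasic D) (hA2 : Assumption2 D d)
    (hdcont : ContinuousOn (fun q : ℝ × ℝ => d q.1 q.2) (Ici 0 ×ˢ Ioi 0))
    {Sh : ℕ → Mat p} (hSh : ∀ n, (Sh n).PosSemidef) {S0 : Mat p}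
    (hconv : Tendsto (fun n => frobSq (Sh n - S0)) atTop (𝓝 0))
    {ε : ℕ → ℝ} (hε : ∀ n, 0 < ε n) (hε0 : Tendsto ε atTop (𝓝 0)) {X : ℕ → Mat p}
    (hmm : ∀ n, MinimaxEq D (Sh n) (ε n))
    (hfin : ∀ n i, d ((hSh n).1.eigenvalues i) ((hSh n).1.eigenvalues i) ≠ ⊤)
    (hX : ∀ n, IsCSESol D (Sh n) (ε n) (X n)) :
    Tendsto (fun n => frobSq (X n - S0)) atTop (𝓝 0) := by
  rcases Nat.eq_zero_or_pos p with rfl | hp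
  · simp [frobSq, trace]
  have hd := hA2.genBasic hp hD
  choose V μ σ hV hμm hμ0 hμσ hdec using fun n => (hSh n).exists_sorted_diagonalization
  have hμd : ∀ n, ∑ i, d (μ n i) (μ n i) ≤ (ε n : EReal) := fun n => by
    rw [Finset.sum_eq_zero fun i _ => (hd.2.1 _ _ (hμ0 n i) (hμ0 n i)
      (by simpa [hμσ] using hfin n (σ n i))).2 rfl]
    exact_mod_cast (hε n).le
  choose s hs0 hsd hsq hXs using fun n =>
    (hX n).exists_conj_diagonal_near hA2 (hV n) (hμm n) (hμ0 n) (hdec n) (hε n) (hμd n) (hmm n)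
  have hμb : BddAbove (range fun n => ∑ i, μ n i ^ 2) := by
    obtain ⟨C, hC⟩ := hconv.bddAbove_range
    refine ⟨2 * C + 2 * frobSq S0, ?_⟩
    rintro _ ⟨n, rfl⟩
    have h := frobSq_add_le (Sh n - S0) S0
    rw [sub_add_cancel, hdec n, (hV n).frobSq_conj, frobSq_diagonal, ← hdec n] at h
    linarith [hC ⟨n, rfl⟩]
  have hnear : Tendsto (fun n => frobSq (X n - V n * diagonal (s n) * (V n)ᵀ)) atTop (𝓝 0) :=
    squeeze_zero (fun n => frobSq_nonneg _) hXs hε0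
  have haligned : Tendsto (fun n => frobSq (V n * diagonal (s n) * (V n)ᵀ - Sh n)) atTop (𝓝 0) := by
    simpa only [hdec, (hV _).frobSq_conj_diagonal_sub] using
      hd.tendsto_sum_sq_sub hdcont hε0 hs0 hμ0 hμb hsd hsq
  simpa using tendsto_frobSq_add (tendsto_frobSq_add hnear haligned) hconv

theorem stmt_8_general {p : ℕ}
    (D : Mat p → Mat p → EReal) (d : ℝ → ℝ → EReal)
    (hDbasic : DivergenceBasic D)
    (hA2 : Assumption2 D d)
    (hdcont : ContinuousOn (fun q : ℝ × ℝ => d q.1 q.2) (Set.Ici 0 ×ˢ Set.Ioi 0))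
    {Ω : Type*} [MeasurableSpace Ω] (P : Measure Ω)
    (Sn : ℕ → Ω → Mat p)
    (hpsd : ∀ n ω, (Sn n ω).PosSemidef)
    (S0 : Mat p)
    (hconv : ∀ᵐ ω ∂P, Tendsto (fun n => frobSq (Sn n ω - S0)) atTop (nhds 0))
    (eps : ℕ → ℝ) (heps : ∀ n, 0 < eps n) (heps0 : Tendsto eps atTop (nhds 0))
    (Xn : ℕ → Ω → Mat p)
    (hA13 : ∀ n, ∀ᵐ ω ∂P,
      MinimaxEq D (Sn n ω) (eps n) ∧
      (∀ i, d ((hpsd n ω).1.eigenvalues i) ((hpsd n ω).1.eigenvalues i) ≠ ⊤) ∧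
      ((eps n : ℝ) : EReal) < ∑ i, d 0 ((hpsd n ω).1.eigenvalues i))
    (hXn : ∀ n, ∀ᵐ ω ∂P, IsCSESol D (Sn n ω) (eps n) (Xn n ω)) :
    ∀ᵐ ω ∂P, Tendsto (fun n => frobSq (Xn n ω - S0)) atTop (nhds 0) := by
  filter_upwards [hconv, ae_all_iff.2 hA13, ae_all_iff.2 hXn] with ω hconvω hA13ω hXω
  exact tendsto_frobSq_sub_of_isCSESol hDbasic hA2 hdcont (hpsd · ω) hconvω heps heps0
    (fun n => (hA13ω n).1) (fun n => (hA13ω n).2.1) hXω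

/-- Proposition: consistency.
Let `Σ̂ₙ` be measurable estimators converging `ℙ`-a.s. (in Frobenius norm) to
`Σ₀ ∈ 𝕊₊ᵖ`, and let `εₙ > 0` with `εₙ → 0`. Suppose `D` satisfies Assumption 2, the
generator `d` is jointly continuous on `ℝ₊ × (0,∞)`, and for every `n`, `ℙ`-a.s.,
Assumptions 1 and 3 hold at `(Σ̂ₙ, εₙ)` (Assumption 4 holds globally). If `X*ₙ` is the
minimizer of (CSE) with nominal matrix `Σ̂ₙ` and radius `εₙ`, then `X*ₙ → Σ₀` `ℙ`-a.s.
in Frobenius norm. -/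
theorem stmt_8 {p : ℕ}
    (D : Mat p → Mat p → EReal) (d : ℝ → ℝ → EReal) (d₁ d₂ : ℝ → ℝ → ℝ)
    (hDbasic : DivergenceBasic D)
    (hA2 : Assumption2 D d)
    (hdcont : ContinuousOn (fun q : ℝ × ℝ => d q.1 q.2) (Set.Ici 0 ×ˢ Set.Ioi 0))
    (hA4 : Assumption4 d d₁ d₂)
    {Ω : Type*} [MeasurableSpace Ω] (P : Measure Ω) [IsProbabilityMeasure P]
    (Sn : ℕ → Ω → Mat p)
    (hmeas : ∀ n i j, Measurable fun ω => Sn n ω i j)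
    (hpsd : ∀ n ω, (Sn n ω).PosSemidef)
    (S0 : Mat p) (hS0 : S0.PosSemidef)
    (hconv : ∀ᵐ ω ∂P, Tendsto (fun n => frobSq (Sn n ω - S0)) atTop (nhds 0))
    (eps : ℕ → ℝ) (heps : ∀ n, 0 < eps n) (heps0 : Tendsto eps atTop (nhds 0))
    (Xn : ℕ → Ω → Mat p)
    (hA13 : ∀ n, ∀ᵐ ω ∂P,
      MinimaxEq D (Sn n ω) (eps n) ∧
      (∀ i, d ((hpsd n ω).1.eigenvalues i) ((hpsd n ω).1.eigenvalues i) ≠ ⊤) ∧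
      ((eps n : ℝ) : EReal) < ∑ i, d 0 ((hpsd n ω).1.eigenvalues i))
    (hXn : ∀ n, ∀ᵐ ω ∂P, IsCSESol D (Sn n ω) (eps n) (Xn n ω)) :
    ∀ᵐ ω ∂P, Tendsto (fun n => frobSq (Xn n ω - S0)) atTop (nhds 0) :=
  stmt_8_general D d hDbasic hA2 hdcont P Sn hpsd S0 hconv eps heps heps0 Xn hA13 hXn
end
end
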